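/- Let w be the formal power series w = ∑_{m≥1} m^{m−1}·y^m/m! with rational coefficients. Then for every n ≥ 1, the n-th formal derivative of w with respect to y equals exp(n·w) · u^n · R_n(u), where u = (1 − w)⁻¹ is the multiplicative inverse of 1 − w in the formal power series ring (which exists since 1 − w has constant term 1), and R_n(u) denotes the evaluation of the polynomial R_n at the power series u. -/

import Mathlib

/-- Lambert's series `w = ∑_{n ≥ 1} n^(n-1) yⁿ/n!` as a formal power series over `ℚ`. -/
noncomputable def lambertW : PowerSeries ℚ :=
  PowerSeries.mk fun n => if n = 0 then 0 else (n : ℚ) ^ (n - 1) / n.factorial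

/-- The formal exponential `exp f = ∑_{k ≥ 0} f^k/k!` of a formal power series `f`
with zero constant term: since `f^k` has order at least `k`, the coefficient of `yⁿ`
only involves the terms with `k ≤ n`. -/
noncomputable def expOf (f : PowerSeries ℚ) : PowerSeries ℚ :=
  PowerSeries.mk fun n =>
    ∑ k ∈ Finset.range (n + 1), PowerSeries.coeff (R := ℚ) n (f ^ k) / k.factorial

open Polynomial in
/-- The Ramanujan polynomials `R n`, defined by `R 1 = 1` and
`R (n+1) = n (1 + y) R n + y² R n′`. -/
noncomputable def ramanujanR : ℕ → Polynomial ℤ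
  | 0 => 1
  | 1 => 1
  | (n + 2) =>
      ((n : Polynomial ℤ) + 1) * (1 + X) * ramanujanR (n + 1) +
        X ^ 2 * derivative (ramanujanR (n + 1))

/-!
Abel's identity `∑_{j=1}^m C(m,j) (x - j)^(m-j) j^(j-1) = m x^(m-1)`, obtained from the
vanishing of `m`-th finite differences of polynomials of degree `< m`, is exactly the
coefficient identity behind `(1 + X w') (1 - w) = 1`, i.e. `X w' (1 - w) = w`.
Differentiating the latter shows that `w' (1 - w)` solves the same linear equation
`f' = w' f` as `exp w`, whence `w' = exp(w) u`. Consequently `u' = w' u²` and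
`w'' = w'² (1 + u)`, and for any derivation satisfying these two relations the recursion
defining `R_n` is precisely what makes `D^n w = w'^n R_n(u)` inductive.
Finally `exp(n w) = (exp w)^n`.
-/

open PowerSeries Finset

theorem sum_neg_one_pow_mul_choose_mul_pow_eq_zero {R : Type*} [CommRing R] {N j : ℕ}
    (h : j < N) :
    ∑ k ∈ range (N + 1), (-1 : R) ^ (N - k) * N.choose k * (k : R) ^ j = 0 := by
  have := congrFun (fwdDiff_iter_pow_eq_zero_of_lt (R := R) h) 0
  rw [fwdDiff_iter_eq_sum_shift] at this
  simpa [zsmul_eq_mul] using this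

theorem sum_Icc_neg_one_pow_mul_choose_mul_pow_pred {R : Type*} [CommRing R] (N : ℕ) :
    ∑ k ∈ Icc 1 N, (-1 : R) ^ (N - k) * N.choose k * (k : R) ^ (N - 1) =
      if N = 1 then 1 else 0 := by
  rcases N.eq_zero_or_pos with rfl | hN
  · simp
  have h := sum_neg_one_pow_mul_choose_mul_pow_eq_zero (R := R) (Nat.sub_lt hN one_pos)
  rw [Nat.range_succ_eq_Icc_zero, ← Ioc_insert_left (Nat.zero_le _),
    sum_insert left_notMem_Ioc] at h
  rw [show Icc 1 N = Ioc 0 N from rfl, eq_neg_of_add_eq_zero_right h]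
  split_ifs with h1
  · simp [h1]
  · simp [zero_pow (show N - 1 ≠ 0 by omega)]

theorem Nat.choose_mul_choose_sub_comm (m i j : ℕ) :
    m.choose j * (m - j).choose i = m.choose i * (m - i).choose j := by
  have h1 := Nat.choose_mul (n := m) (Nat.le_add_left j i)
  have h2 := Nat.choose_mul (n := m) (Nat.le_add_right i j)
  rw [Nat.add_sub_cancel] at h1
  rw [Nat.add_sub_cancel_left, Nat.choose_symm_add] at h2
  rw [← h1, ← h2]

/-- Abel's identity. -/
theorem sum_Icc_choose_mul_sub_pow_mul_pow {R : Type*} [CommRing R] (x : R) (m : ℕ) :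
    ∑ j ∈ Icc 1 m, (m.choose j : R) * (x - j) ^ (m - j) * (j : R) ^ (j - 1) =
      m * x ^ (m - 1) := by
  have expand : ∀ j ∈ Icc 1 m, (m.choose j : R) * (x - j) ^ (m - j) * (j : R) ^ (j - 1) =
      ∑ i ∈ range (m - j + 1), (m.choose i : R) * x ^ i *
        ((-1) ^ (m - i - j) * (m - i).choose j * (j : R) ^ (m - i - 1)) := by
    intro j hj
    rw [sub_eq_add_neg, add_pow, mul_sum, sum_mul]
    refine sum_congr rfl fun i hi => ?_
    simp only [mem_Icc, mem_range] at hj hi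
    have hchoose := congrArg (Nat.cast (R := R)) (Nat.choose_mul_choose_sub_comm m i j)
    push_cast at hchoose
    rw [neg_pow, show m - j - i = m - i - j by omega,
      show m - i - 1 = (m - i - j) + (j - 1) by omega, pow_add]
    linear_combination
      x ^ i * (-1) ^ (m - i - j) * (j : R) ^ (m - i - j) * (j : R) ^ (j - 1) * hchoose
  rw [sum_congr rfl expand, sum_comm' (t' := range m) (s' := fun i => Icc 1 (m - i))]
  · simp_rw [← mul_sum, sum_Icc_neg_one_pow_mul_choose_mul_pow_pred]
    rcases m.eq_zero_or_pos with rfl | hm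
    · simp
    rw [sum_eq_single_of_mem (m - 1) (by simp [hm])]
    · simp [Nat.sub_sub_self hm, Nat.choose_symm hm]
    · intro i hi hne
      rw [if_neg (by simp at hi; omega), mul_zero]
  · intro j i
    simp only [mem_Icc, mem_range]
    omega

theorem PowerSeries.eq_of_derivative_eq_mul {R : Type*} [CommRing R] [IsAddTorsionFree R]
    {f g h : R⟦X⟧} (hf : d⁄dX R f = h * f) (hg : d⁄dX R g = h * g)
    (h0 : constantCoeff f = constantCoeff g) : f = g := by
  ext n
  induction n using Nat.strong_induction_on with
  | _ n ih =>
    rcases n with _ | n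
    · simpa using h0
    have key : coeff n (h * f) = coeff n (h * g) := by
      rw [coeff_mul, coeff_mul]
      refine sum_congr rfl fun p hp => ?_
      rw [ih p.2 (by have := mem_antidiagonal.1 hp; omega)]
    rw [← hf, ← hg, coeff_derivative, coeff_derivative, mul_comm, mul_comm _ (_ + 1)] at key
    exact_mod_cast nsmul_right_injective n.succ_ne_zero (by simpa [nsmul_eq_mul] using key)

theorem expOf_eq_subst_exp {f : ℚ⟦X⟧} (hf : constantCoeff f = 0) :
    expOf f = (exp ℚ).subst f := by
  ext n
  rw [coeff_subst' (HasSubst.of_constantCoeff_zero' hf),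
    finsum_eq_sum_of_support_subset (s := range (n + 1))]
  · simp [expOf, coeff_exp, div_eq_inv_mul]
  · intro d hd
    by_contra hdn
    refine hd ?_
    dsimp only
    rw [coeff_of_lt_order n ?_, smul_zero]
    refine lt_of_lt_of_le ?_ (le_order_pow_of_constantCoeff_eq_zero d hf)
    simp only [coe_range, Set.mem_Iio, not_lt] at hdn
    exact_mod_cast hdn

theorem constantCoeff_expOf (f : ℚ⟦X⟧) : constantCoeff (expOf f) = 1 := by
  rw [← coeff_zero_eq_constantCoeff_apply]
  simp [expOf]

theorem derivative_expOf {f : ℚ⟦X⟧} (hf : constantCoeff f = 0) :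
    d⁄dX ℚ (expOf f) = d⁄dX ℚ f * expOf f := by
  rw [expOf_eq_subst_exp hf, derivative_subst (HasSubst.of_constantCoeff_zero' hf),
    derivative_exp, mul_comm]

theorem expOf_natCast_smul {f : ℚ⟦X⟧} (hf : constantCoeff f = 0) (n : ℕ) :
    expOf ((n : ℚ) • f) = expOf f ^ n := by
  have hsubst := HasSubst.of_constantCoeff_zero' hf
  rw [expOf_eq_subst_exp hf, expOf_eq_subst_exp (by simp [hf]), ← subst_pow hsubst,
    exp_pow_eq_rescale_exp, rescale_eq_subst, subst_comp_subst_apply (HasSubst.smul_X' _) hsubst,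
    subst_smul hsubst, subst_X hsubst]

theorem Derivation.iterate_eq_pow_mul_aeval_ramanujanR {R A : Type*} [CommRing R] [CommRing A]
    [Algebra R A] (D : Derivation R A A) {f u : A} (hu : D u = D f * u ^ 2)
    (hf : D (D f) = D f ^ 2 * (1 + u)) {n : ℕ} (hn : 1 ≤ n) :
    D^[n] f = D f ^ n * Polynomial.aeval u (ramanujanR n) := by
  induction n, hn using Nat.le_induction with
  | base => simp [ramanujanR]
  | succ n hn ih =>
    obtain ⟨k, rfl⟩ := Nat.exists_eq_add_of_le' hn
    rw [Function.iterate_succ_apply', ih, Derivation.leibniz, Derivation.leibniz_pow,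
      ← Derivation.coe_restrictScalars ℤ D, Derivation.comp_aeval_eq,
      Derivation.coe_restrictScalars, hu, hf]
    simp only [ramanujanR, map_add, map_mul, map_pow, Polynomial.aeval_natCast, map_one,
      Polynomial.aeval_X, smul_eq_mul, nsmul_eq_mul, Nat.add_sub_cancel]
    push_cast
    ring

theorem constantCoeff_lambertW : constantCoeff lambertW = 0 := by
  simp [lambertW, ← coeff_zero_eq_constantCoeff_apply]

theorem coeff_lambertW (n : ℕ) :
    coeff n lambertW = if n = 0 then 0 else (n : ℚ) ^ (n - 1) / n.factorial := by
  simp [lambertW]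

theorem coeff_one_add_X_mul_derivative_lambertW (n : ℕ) :
    coeff n (1 + X * d⁄dX ℚ lambertW) = (n : ℚ) ^ n / n.factorial := by
  rcases n with _ | n
  · simp
  rw [map_add, coeff_one, if_neg n.succ_ne_zero, zero_add, coeff_succ_X_mul, coeff_derivative,
    coeff_lambertW, if_neg n.succ_ne_zero, Nat.factorial_succ]
  push_cast
  field_simp
  ring

theorem one_add_X_mul_derivative_lambertW_mul_one_sub :
    (1 + X * d⁄dX ℚ lambertW) * (1 - lambertW) = 1 := by
  have he := coeff_one_add_X_mul_derivative_lambertW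
  generalize 1 + X * d⁄dX ℚ lambertW = e at he ⊢
  suffices e = 1 + lambertW * e by linear_combination this
  ext m
  rcases m.eq_zero_or_pos with rfl | hm
  · simp [he, constantCoeff_lambertW]
  rw [map_add, coeff_one, if_neg hm.ne', zero_add, coeff_mul,
    Nat.sum_antidiagonal_eq_sum_range_succ (fun j i => coeff j lambertW * coeff i e), range_eq_Ico,
    sum_eq_sum_Ico_succ_bot m.succ_pos, Nat.succ_eq_add_one, zero_add, Ico_add_one_right_eq_Icc,
    coeff_zero_eq_constantCoeff_apply, constantCoeff_lambertW, zero_mul, zero_add, he]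
  have hterm : ∀ j ∈ Icc 1 m, coeff j lambertW * coeff (m - j) e =
      (m.choose j : ℚ) * ((m : ℚ) - j) ^ (m - j) * (j : ℚ) ^ (j - 1) / m.factorial := by
    intro j hj
    rw [mem_Icc] at hj
    rw [coeff_lambertW, if_neg (by omega), he, Nat.cast_sub hj.2,
      ← Nat.choose_mul_factorial_mul_factorial hj.2]
    have := Nat.choose_pos hj.2
    push_cast
    field_simp
  rw [sum_congr rfl hterm, ← sum_div, sum_Icc_choose_mul_sub_pow_mul_pow, mul_pow_sub_one hm.ne']

theorem derivative_lambertW_mul_one_sub :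
    d⁄dX ℚ lambertW * (1 - lambertW) = expOf lambertW := by
  set g := d⁄dX ℚ lambertW * (1 - lambertW) with hg
  have hXg : X * g = lambertW := by
    linear_combination one_add_X_mul_derivative_lambertW_mul_one_sub
  have hdg : d⁄dX ℚ g = d⁄dX ℚ lambertW * g := by
    refine mul_left_cancel₀ X_ne_zero ?_
    have hd := congrArg (d⁄dX ℚ) hXg
    rw [Derivation.leibniz, derivative_X, smul_eq_mul, smul_eq_mul] at hd
    linear_combination hd - d⁄dX ℚ lambertW * hXg - hg
  refine eq_of_derivative_eq_mul hdg (derivative_expOf constantCoeff_lambertW) ?_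
  rw [constantCoeff_expOf, hg, map_mul, map_sub, constantCoeff_lambertW,
    ← coeff_zero_eq_constantCoeff_apply, coeff_derivative, coeff_lambertW]
  simp

theorem derivative_lambertW :
    d⁄dX ℚ lambertW = expOf lambertW * (1 - lambertW)⁻¹ := by
  rw [← derivative_lambertW_mul_one_sub, mul_assoc,
    PowerSeries.mul_inv_cancel _ (by simp [constantCoeff_lambertW]), mul_one]

theorem derivative_inv_one_sub_lambertW :
    d⁄dX ℚ (1 - lambertW)⁻¹ = d⁄dX ℚ lambertW * (1 - lambertW)⁻¹ ^ 2 := by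
  simp [mul_comm]

theorem derivative_derivative_lambertW :
    d⁄dX ℚ (d⁄dX ℚ lambertW) = d⁄dX ℚ lambertW ^ 2 * (1 + (1 - lambertW)⁻¹) := by
  conv_lhs => rw [derivative_lambertW]
  rw [Derivation.leibniz, derivative_expOf constantCoeff_lambertW,
    derivative_inv_one_sub_lambertW, derivative_lambertW]
  simp only [smul_eq_mul]
  ring

/-- The `n`-th formal derivative of Lambert'"'"'s series `w` equals
`exp(n w) · uⁿ · R_n(u)` where `u = (1 - w)⁻¹`. -/
theorem lambertW_iterated_derivative (n : ℕ) (hn : 1 ≤ n) :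
    (fun f : PowerSeries ℚ => f.derivativeFun)^[n] lambertW =
      expOf ((n : ℚ) • lambertW) * (1 - lambertW)⁻¹ ^ n *
        Polynomial.aeval (1 - lambertW)⁻¹ (ramanujanR n) := by
  change (⇑(d⁄dX ℚ))^[n] lambertW = _
  rw [expOf_natCast_smul constantCoeff_lambertW, ← mul_pow, ← derivative_lambertW]
  convert (d⁄dX ℚ).iterate_eq_pow_mul_aeval_ramanujanR derivative_inv_one_sub_lambertW
    derivative_derivative_lambertW hn using 2
  -- the statement's `ℤ`-algebra structure on `ℚ⟦X⟧` is not syntactically `algebraInt`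
  congr <;> exact Subsingleton.elim _ _
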